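/- arXiv:2412.05985 — 2 statements merged into one kernel-verified Lean document; each statement's English description precedes it below -/
import Mathlib

section
/- There exist elements a, b, y, z of A₇ such that y has order 5, z has order 7, [a, b] · y · z = 1, and a, b, y, z generate A₇. (For instance a = (1 3 6 4 2), b = (2 4)(6 7), y = (2 5 4 6 3), z = (1 2 3 4 5 7 6).) -/
open Equiv Equiv.Perm Subgroup

def pa : Equiv.Perm (Fin 7) := c[(2 : Fin 7), 3, 4, 5, 6]
def pb : Equiv.Perm (Fin 7) := c[(0 : Fin 7), 2] * c[(3 : Fin 7), 5, 4, 6]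
def py : Equiv.Perm (Fin 7) := c[(1 : Fin 7), 4, 3, 5, 2]
def pz : Equiv.Perm (Fin 7) := c[(0 : Fin 7), 1, 2, 3, 4, 6, 5]

lemma mem_of_eq_word {H : Subgroup (Equiv.Perm (Fin 7))} (w : Equiv.Perm (Fin 7))
    (hw : w ∈ H) {g : Equiv.Perm (Fin 7)} (he : g = w) : g ∈ H := he ▸ hw

lemma three_decomp (σ : Equiv.Perm (Fin 7)) (h : σ.IsThreeCycle) :
    ∃ a b c : Fin 7, a ≠ b ∧ b ≠ c ∧ a ≠ c ∧ σ = Equiv.swap a b * Equiv.swap b c := by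
  obtain ⟨a, ha, hcyc⟩ := h.isCycle
  have h3 : σ ^ 3 = 1 := by rw [← h.orderOf]; exact pow_orderOf_eq_one σ
  have hs3 : ∀ x, σ (σ (σ x)) = x := by
    intro x
    have hx := Equiv.ext_iff.1 h3 x
    simpa [pow_succ, Equiv.Perm.mul_apply] using hx
  have hab : a ≠ σ a := Ne.symm ha
  have hbc : σ a ≠ σ (σ a) := fun he => ha (σ.injective he).symm
  have hac : a ≠ σ (σ a) := by
    intro he
    have h1 : σ a = σ (σ (σ a)) := congrArg σ he
    rw [hs3] at h1
    exact ha h1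
  refine ⟨a, σ a, σ (σ a), hab, hbc, hac, Equiv.ext fun x => ?_⟩
  rcases eq_or_ne x a with rfl | hxa
  · rw [Equiv.Perm.mul_apply, Equiv.swap_apply_of_ne_of_ne hab hac, Equiv.swap_apply_left]
  rcases eq_or_ne x (σ a) with rfl | hxb
  · rw [Equiv.Perm.mul_apply, Equiv.swap_apply_left,
      Equiv.swap_apply_of_ne_of_ne (Ne.symm hac) (Ne.symm hbc)]
  rcases eq_or_ne x (σ (σ a)) with rfl | hxc
  · rw [Equiv.Perm.mul_apply, Equiv.swap_apply_right, Equiv.swap_apply_right]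
    exact hs3 a
  have hfix : σ x = x := by
    by_contra hne
    obtain ⟨i, -, hi⟩ := (hcyc hne).exists_pow_eq'
    have hdec : σ ^ i = σ ^ (i % 3) := by
      conv_lhs => rw [← Nat.mod_add_div i 3]
      rw [pow_add, pow_mul, h3, one_pow, mul_one]
    rw [hdec] at hi
    rcases (by omega : i % 3 = 0 ∨ i % 3 = 1 ∨ i % 3 = 2) with hm | hm | hm <;> rw [hm] at hi
    · exact hxa (by simpa using hi.symm)
    · exact hxb (by simpa using hi.symm)
    · refine hxc ?_
      have : σ (σ a) = x := by simpa [pow_succ, Equiv.Perm.mul_apply] using hi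
      exact this.symm
  rw [Equiv.Perm.mul_apply, Equiv.swap_apply_of_ne_of_ne hxb hxc,
    Equiv.swap_apply_of_ne_of_ne hxa hxb, hfix]

set_option maxRecDepth 20000 in
theorem stmt_11 :
    ∃ a b y z : Equiv.Perm (Fin 7),
      a ∈ alternatingGroup (Fin 7) ∧ b ∈ alternatingGroup (Fin 7) ∧
      y ∈ alternatingGroup (Fin 7) ∧ z ∈ alternatingGroup (Fin 7) ∧
      orderOf y = 5 ∧ orderOf z = 7 ∧
      (a⁻¹ * b⁻¹ * a * b) * y * z = 1 ∧
      Subgroup.closure {a, b, y, z} = alternatingGroup (Fin 7) := by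
  haveI : Fact (Nat.Prime 5) := ⟨by norm_num⟩
  haveI : Fact (Nat.Prime 7) := ⟨by norm_num⟩
  refine ⟨pa, pb, py, pz,
    Equiv.Perm.mem_alternatingGroup.2 (by decide),
    Equiv.Perm.mem_alternatingGroup.2 (by decide),
    Equiv.Perm.mem_alternatingGroup.2 (by decide),
    Equiv.Perm.mem_alternatingGroup.2 (by decide),
    orderOf_eq_prime (by decide) (by decide),
    orderOf_eq_prime (by decide) (by decide),
    by decide, ?_⟩
  set H := Subgroup.closure ({pa, pb, py, pz} : Set (Equiv.Perm (Fin 7))) with hHdef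
  have ha : pa ∈ H := Subgroup.subset_closure (by simp)
  have hb : pb ∈ H := Subgroup.subset_closure (by simp)
  have hy : py ∈ H := Subgroup.subset_closure (by simp)
  have hz : pz ∈ H := Subgroup.subset_closure (by simp)
  have hA : ∀ j : Fin 7, j ≠ 0 → Equiv.swap 0 1 * Equiv.swap 0 j ∈ H := by
    intro j hj
    fin_cases j
    · exact absurd rfl hj
    · exact mem_of_eq_word 1 (one_mem H) (by decide)
    · exact mem_of_eq_word (pa * pb⁻¹ * pz * pb)
        (mul_mem (mul_mem (mul_mem ha (inv_mem hb)) hz) hb) (by decide)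
    · exact mem_of_eq_word (py * pa * pa * pb⁻¹ * py⁻¹)
        (mul_mem (mul_mem (mul_mem (mul_mem hy ha) ha) (inv_mem hb)) (inv_mem hy)) (by decide)
    · exact mem_of_eq_word (py * pb⁻¹ * pz * pa)
        (mul_mem (mul_mem (mul_mem hy (inv_mem hb)) hz) ha) (by decide)
    · exact mem_of_eq_word (pa * py * pb⁻¹ * pz)
        (mul_mem (mul_mem (mul_mem ha hy) (inv_mem hb)) hz) (by decide)
    · exact mem_of_eq_word (pb * py⁻¹ * pa * pb)
        (mul_mem (mul_mem (mul_mem hb (inv_mem hy)) ha) hb) (by decide)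
  have hB : ∀ i j : Fin 7, i ≠ 0 → j ≠ 0 → Equiv.swap 0 i * Equiv.swap 0 j ∈ H := by
    have hid : ∀ i j : Fin 7, Equiv.swap 0 i * Equiv.swap 0 j =
        (Equiv.swap 0 1 * Equiv.swap 0 i)⁻¹ * (Equiv.swap 0 1 * Equiv.swap 0 j) := by decide
    intro i j hi hj
    rw [hid i j]
    exact mul_mem (inv_mem (hA i hi)) (hA j hj)
  have hA' : ∀ x y : Fin 7, x ≠ y → Equiv.swap 0 1 * Equiv.swap x y ∈ H := by
    have hid2 : ∀ x y : Fin 7, x ≠ 0 → y ≠ 0 → x ≠ y → Equiv.swap 0 1 * Equiv.swap x y =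
        (Equiv.swap 0 1 * Equiv.swap 0 x) * (Equiv.swap 0 y * Equiv.swap 0 x) := by decide
    intro x y hxy
    rcases eq_or_ne x 0 with rfl | hx
    · exact hA y (Ne.symm hxy)
    rcases eq_or_ne y 0 with rfl | hy'
    · rw [Equiv.swap_comm x 0]
      exact hA x hx
    · rw [hid2 x y hx hy' hxy]
      exact mul_mem (hA x hx) (hB y x hy' hx)
  have hC : ∀ x y z w : Fin 7, x ≠ y → z ≠ w → Equiv.swap x y * Equiv.swap z w ∈ H := by
    intro x y z w hxy hzw
    have hid4 : Equiv.swap x y * Equiv.swap z w =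
        (Equiv.swap 0 1 * Equiv.swap x y)⁻¹ * (Equiv.swap 0 1 * Equiv.swap z w) := by
      rw [mul_inv_rev, Equiv.swap_inv, Equiv.swap_inv, mul_assoc, Equiv.swap_mul_self_mul]
    rw [hid4]
    exact mul_mem (inv_mem (hA' x y hxy)) (hA' z w hzw)
  apply le_antisymm
  · rw [hHdef, Subgroup.closure_le]
    intro g hg
    simp only [Set.mem_insert_iff, Set.mem_singleton_iff] at hg
    rcases hg with rfl | rfl | rfl | rfl <;>
      exact Equiv.Perm.mem_alternatingGroup.2 (by decide)
  · rw [← Equiv.Perm.closure_three_cycles_eq_alternating, Subgroup.closure_le]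
    intro σ hσ
    obtain ⟨x1, x2, x3, h12, h23, h13, hrep⟩ := three_decomp σ hσ
    simp only [SetLike.mem_coe]
    rw [hrep]
    exact hC x1 x2 x2 x3 h12 h23
end

section
/- Let M₁₁ be the Mathieu group of degree 11, viewed as a subgroup of Sym(11). There exist a, b, c ∈ M₁₁ with c of order 5, [a, b] · c = 1, and ⟨a, b, c⟩ = M₁₁. (For instance a = (1 4 11 10 7 5 8 6 9 3 2), b = (3 7 4 5)(6 11 9 8), c = (2 5 4 7 6)(3 11 9 8 10).) -/
/-- The Mathieu group M₁₁ as a subgroup of Sym(11), generated by the standard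
generators (1 2 … 11) and (3 7 11 8)(4 10 5 6), written zero-based on `Fin 11`. -/
def M11 : Subgroup (Equiv.Perm (Fin 11)) :=
  Subgroup.closure {c[0, 1, 2, 3, 4, 5, 6, 7, 8, 9, 10], c[2, 6, 10, 7] * c[3, 9, 4, 5]}

set_option maxRecDepth 100000 in
set_option maxHeartbeats 1000000 in
theorem stmt_14 :
    ∃ a b c : Equiv.Perm (Fin 11),
      a ∈ M11 ∧ b ∈ M11 ∧ c ∈ M11 ∧ orderOf c = 5 ∧
      (a⁻¹ * b⁻¹ * a * b) * c = 1 ∧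
      Subgroup.closure {a, b, c} = M11 := by
  set x : Equiv.Perm (Fin 11) := c[0, 1, 2, 3, 4, 5, 6, 7, 8, 9, 10] with hx
  set y : Equiv.Perm (Fin 11) := c[2, 6, 10, 7] * c[3, 9, 4, 5] with hy
  have hxm : x ∈ M11 := Subgroup.subset_closure (Set.mem_insert _ _)
  have hym : y ∈ M11 := Subgroup.subset_closure (Set.mem_insert_of_mem _ rfl)
  have hcm : y⁻¹ * x⁻¹ * y * x ∈ M11 :=
    mul_mem (mul_mem (mul_mem (inv_mem hym) (inv_mem hxm)) hym) hxm
  refine ⟨x, y, y⁻¹ * x⁻¹ * y * x, hxm, hym, hcm, ?_, by group, ?_⟩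
  · haveI : Fact (Nat.Prime 5) := ⟨by norm_num⟩
    apply orderOf_eq_prime
    · rw [hx, hy]; decide
    · rw [hx, hy]; decide
  · apply le_antisymm
    · rw [Subgroup.closure_le]
      rintro g (rfl | rfl | rfl)
      exacts [hxm, hym, hcm]
    · exact Subgroup.closure_mono
        (Set.insert_subset_insert (Set.singleton_subset_iff.2 (Set.mem_insert _ _)))
end
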